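/- arXiv:2407.19933 — 3 statements merged into one kernel-verified Lean document; each statement's English description precedes it below -/
import Mathlib

section
/- Let s, t ∈ ℝ^{ℕ₀^n} be moment sequences (represented by finite measures with all moments finite). Then the Hadamard product s⊙t = (s_α·t_α)_{α∈ℕ₀^n} is a moment sequence. -/
open MeasureTheory

/-- Multiplicative convolution of measures on ℝ^n: pushforward of the product
measure under coordinatewise multiplication. -/
noncomputable def mconv {n : ℕ} (μ ν : Measure (Fin n → ℝ)) : Measure (Fin n → ℝ) :=
  (μ.prod ν).map (fun p => fun i => p.1 i * p.2 i)

/-- `s` is an `ℝ^n`-moment sequence: represented by a finite Borel measure all of whose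
moments exist. -/
def IsMomentSequence {n : ℕ} (s : (Fin n → ℕ) → ℝ) : Prop :=
  ∃ μ : Measure (Fin n → ℝ), IsFiniteMeasure μ ∧
    (∀ α : Fin n → ℕ, Integrable (fun x => ∏ i, x i ^ α i) μ) ∧
    (∀ α : Fin n → ℕ, s α = ∫ x, ∏ i, x i ^ α i ∂μ)

theorem hadamard_product_moment_sequence {n : ℕ} (s t : (Fin n → ℕ) → ℝ)
    (hs : IsMomentSequence s) (ht : IsMomentSequence t) :
    IsMomentSequence (fun α => s α * t α) := by
  obtain ⟨μ, hμf, hμi, hμe⟩ := hs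
  obtain ⟨ν, hνf, hνi, hνe⟩ := ht
  haveI := hμf; haveI := hνf
  have hmul : Measurable (fun p : (Fin n → ℝ) × (Fin n → ℝ) => fun i => p.1 i * p.2 i) := by
    apply measurable_pi_lambda
    intro i
    exact ((measurable_pi_apply i).comp measurable_fst).mul
      ((measurable_pi_apply i).comp measurable_snd)
  have hfmeas : ∀ α : Fin n → ℕ, Measurable (fun x : Fin n → ℝ => ∏ i, x i ^ α i) := by
    intro α
    exact Finset.measurable_prod _ fun i _ => (measurable_pi_apply i).pow_const _
  have hcomp : ∀ α : Fin n → ℕ,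
      (fun p : (Fin n → ℝ) × (Fin n → ℝ) => ∏ i, (p.1 i * p.2 i) ^ α i)
        = fun p => (∏ i, p.1 i ^ α i) * (∏ i, p.2 i ^ α i) := by
    intro α
    funext p
    simp [mul_pow, Finset.prod_mul_distrib]
  refine ⟨mconv μ ν, ?_, ?_, ?_⟩
  · unfold mconv
    infer_instance
  · intro α
    rw [mconv, integrable_map_measure (hfmeas α).aestronglyMeasurable hmul.aemeasurable]
    have : ((fun x : Fin n → ℝ => ∏ i, x i ^ α i) ∘
        (fun p : (Fin n → ℝ) × (Fin n → ℝ) => fun i => p.1 i * p.2 i))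
        = fun p => (∏ i, p.1 i ^ α i) * (∏ i, p.2 i ^ α i) := by
      funext p
      simp [Function.comp, mul_pow, Finset.prod_mul_distrib]
    rw [this]
    exact (hμi α).mul_prod (hνi α)
  · intro α
    show s α * t α = _
    rw [hμe α, hνe α, mconv,
      integral_map hmul.aemeasurable (hfmeas α).aestronglyMeasurable]
    have : (fun p : (Fin n → ℝ) × (Fin n → ℝ) => ∏ i, (fun i => p.1 i * p.2 i) i ^ α i)
        = fun p => (∏ i, p.1 i ^ α i) * (∏ i, p.2 i ^ α i) := by
      funext p
      simp [mul_pow, Finset.prod_mul_distrib]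
    rw [this]
    exact (integral_prod_mul (fun x : Fin n → ℝ => ∏ i, x i ^ α i) (fun x : Fin n → ℝ => ∏ i, x i ^ α i)).symm
end

section
/- Let T : ℝ[x] → ℝ[x] be a linear diagonal operator, Tx^k = t_k·x^k for all k ∈ ℕ₀. If T maps polynomials nonnegative on ℝ to polynomials nonnegative on ℝ, then the linear functional L : ℝ[x] → ℝ defined by L(p) = (Tp)(1) is nonnegative on all polynomials nonnegative on ℝ, and L(x^k) = t_k for all k; consequently (t_k)_{k∈ℕ₀} is a Hamburger moment sequence. -/
open MeasureTheory Polynomial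
open Filter Topology CompactlySupported

/-!
The functional `L p = (T p)(1)` is nonnegative on nonnegative polynomials because `T` preserves
them, and `L (X ^ k) = t k` because `T` is diagonal. The measure comes from Haviland's theorem on
`ℝ`: by the M. Riesz extension theorem, `L` extends to a positive functional `Λ` on the functions of
polynomial growth (polynomials are cofinal there), and the restriction of `Λ` to `C_c(ℝ, ℝ)` is
integration against a measure `μ` by the Riesz–Markov–Kakutani theorem. For `p ≥ 0`, cutting `p`
off outside `[-n, n]` gives `∫ p dμ ≤ L p` by Fatou's lemma, and `L p ≤ ∫ p dμ + L (p X²) / n²`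
because `p` exceeds its cut-off by at most `p X² / n²`.
-/

namespace Polynomial

theorem abs_eval_le_eval_sq_add_one (p : ℝ[X]) (x : ℝ) : |p.eval x| ≤ (p ^ 2 + 1).eval x := by
  simp only [eval_add, eval_pow, eval_one]
  nlinarith [sq_abs (p.eval x), sq_nonneg (|p.eval x| - 1)]

noncomputable def truncationBump (n : ℕ) : ContDiffBump (0 : ℝ) where
  rIn := n + 1
  rOut := n + 2
  rIn_pos := by positivity
  rIn_lt_rOut := by linarith

noncomputable def truncation (p : ℝ[X]) (n : ℕ) : C_c(ℝ, ℝ) :=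
  p.toContinuousMap •
    ⟨⟨truncationBump n, (truncationBump n).continuous⟩, (truncationBump n).hasCompactSupport⟩

variable (p : ℝ[X]) (n : ℕ) {x : ℝ}

theorem truncation_apply (x : ℝ) : p.truncation n x = p.eval x * truncationBump n x := rfl

theorem truncation_nonneg (hp : 0 ≤ p.eval x) : 0 ≤ p.truncation n x :=
  mul_nonneg hp (truncationBump n).nonneg

theorem truncation_le (hp : 0 ≤ p.eval x) : p.truncation n x ≤ p.eval x :=
  mul_le_of_le_one_right hp (truncationBump n).le_one

theorem truncation_eq_of_abs_le (hx : |x| ≤ n + 1) : p.truncation n x = p.eval x := by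
  rw [truncation_apply,
    (truncationBump n).one_of_mem_closedBall (by simpa [truncationBump] using hx), mul_one]

theorem eval_sub_truncation_le (hp : 0 ≤ p.eval x) :
    p.eval x - p.truncation n x ≤ (1 / ((n : ℝ) + 1)) ^ 2 * (p * X ^ 2).eval x := by
  rcases le_or_gt |x| (n + 1) with hx | hx
  · rw [truncation_eq_of_abs_le p n hx, sub_self]
    simp only [eval_mul, eval_pow, eval_X]
    positivity
  · have htrunc := p.truncation_nonneg n hp
    have hx2 : ((n : ℝ) + 1) ^ 2 ≤ x ^ 2 := by
      rw [← sq_abs x]; gcongr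
    have hp_le : p.eval x ≤ (1 / ((n : ℝ) + 1)) ^ 2 * (p.eval x * x ^ 2) := by
      rw [div_pow, one_pow, div_mul_eq_mul_div, one_mul, le_div_iff₀ (by positivity)]
      exact mul_le_mul_of_nonneg_left hx2 hp
    simp only [eval_mul, eval_pow, eval_X]
    linarith

theorem tendsto_truncation (x : ℝ) :
    Tendsto (fun n => p.truncation n x) atTop (𝓝 (p.eval x)) := by
  refine tendsto_const_nhds.congr' ?_
  obtain ⟨N, hN⟩ := exists_nat_ge |x|
  filter_upwards [eventually_ge_atTop N] with n hn
  have hNn : (N : ℝ) ≤ n := by exact_mod_cast hn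
  exact (truncation_eq_of_abs_le p n (by linarith)).symm

end Polynomial

def polynomialGrowth : Submodule ℝ (ℝ → ℝ) where
  carrier := {f | ∃ q : ℝ[X], ∀ x, |f x| ≤ q.eval x}
  add_mem' := by
    rintro f g ⟨qf, hqf⟩ ⟨qg, hqg⟩
    exact ⟨qf + qg, fun x => by simpa using (abs_add_le _ _).trans (add_le_add (hqf x) (hqg x))⟩
  zero_mem' := ⟨0, fun x => by simp⟩
  smul_mem' := by
    rintro c f ⟨q, hq⟩
    exact ⟨C |c| * q, fun x => by
      simpa [abs_mul] using mul_le_mul_of_nonneg_left (hq x) (abs_nonneg c)⟩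

namespace polynomialGrowth

instance : PosSMulMono ℝ polynomialGrowth :=
  ⟨fun _ hc _ _ hfg x => mul_le_mul_of_nonneg_left (hfg x) hc⟩

def ofPolynomial : ℝ[X] →ₗ[ℝ] polynomialGrowth where
  toFun p := ⟨fun x => p.eval x, p ^ 2 + 1, p.abs_eval_le_eval_sq_add_one⟩
  map_add' p q := by ext x; simp
  map_smul' c p := by ext x; simp

@[simp]
theorem coe_ofPolynomial (p : ℝ[X]) :
    ((ofPolynomial p : polynomialGrowth) : ℝ → ℝ) = fun x => p.eval x := rfl

theorem ofPolynomial_injective : Function.Injective ofPolynomial :=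
  fun _ _ h => Polynomial.funext (congrFun (congrArg Subtype.val h))

def ofCompactlySupported : C_c(ℝ, ℝ) →ₚ[ℝ] polynomialGrowth where
  toFun f := ⟨f, by
    obtain ⟨c, hc⟩ := f.continuous.bounded_above_of_compact_support f.hasCompactSupport
    exact ⟨C c, fun x => by simpa using hc x⟩⟩
  map_add' _ _ := rfl
  map_smul' _ _ := rfl
  monotone' _ _ h := h

@[simp]
theorem coe_ofCompactlySupported (f : C_c(ℝ, ℝ)) : (ofCompactlySupported f : ℝ → ℝ) = f := rfl

theorem exists_positiveLinearMap_extension (L : ℝ[X] →ₗ[ℝ] ℝ)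
    (hL : ∀ p : ℝ[X], (∀ x, 0 ≤ p.eval x) → 0 ≤ L p) :
    ∃ Λ : polynomialGrowth →ₚ[ℝ] ℝ, ∀ p, Λ (ofPolynomial p) = L p := by
  let e := LinearEquiv.ofInjective ofPolynomial ofPolynomial_injective
  have he (p : ℝ[X]) : e.symm ⟨ofPolynomial p, p, rfl⟩ = p := e.symm_apply_eq.2 rfl
  let L' : polynomialGrowth →ₗ.[ℝ] ℝ := ⟨LinearMap.range ofPolynomial, L ∘ₗ e.symm.toLinearMap⟩
  have hL'_nonneg :
      ∀ f : L'.domain, (f : polynomialGrowth) ∈ PointedCone.positive ℝ _ → 0 ≤ L' f := by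
    rintro ⟨_, p, rfl⟩ hp
    simpa [L', he] using hL p hp
  have hL'_cofinal :
      ∀ f, ∃ q : L'.domain, (q : polynomialGrowth) + f ∈ PointedCone.positive ℝ _ := by
    rintro ⟨f, q, hq⟩
    exact ⟨⟨ofPolynomial q, q, rfl⟩, fun x => by
      show 0 ≤ q.eval x + f x
      linarith [neg_le_of_abs_le (hq x)]⟩
  obtain ⟨Λ, hΛL', hΛ_nonneg⟩ := riesz_extension _ L' hL'_nonneg hL'_cofinal
  exact ⟨.mk₀ Λ hΛ_nonneg, fun p => (hΛL' ⟨ofPolynomial p, p, rfl⟩).trans (congrArg L (he p))⟩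

variable (Λ : polynomialGrowth →ₚ[ℝ] ℝ)

noncomputable abbrev rieszMeasure : Measure ℝ :=
  RealRMK.rieszMeasure (Λ.comp ofCompactlySupported)

theorem integral_rieszMeasure (f : C_c(ℝ, ℝ)) :
    ∫ x, f x ∂rieszMeasure Λ = Λ (ofCompactlySupported f) :=
  RealRMK.integral_rieszMeasure _ f

variable {Λ}

section Nonneg

variable {p : ℝ[X]} (hp : ∀ x, 0 ≤ p.eval x)
include hp

theorem lintegral_ofReal_eval_le :
    ∫⁻ x, ENNReal.ofReal (p.eval x) ∂rieszMeasure Λ ≤ ENNReal.ofReal (Λ (ofPolynomial p)) := by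
  have htrunc (n : ℕ) :
      ∫⁻ x, ENNReal.ofReal (p.truncation n x) ∂rieszMeasure Λ ≤
        ENNReal.ofReal (Λ (ofPolynomial p)) := by
    rw [← ofReal_integral_eq_lintegral_ofReal (p.truncation n).integrable
      (.of_forall fun x => p.truncation_nonneg n (hp x)), integral_rieszMeasure]
    exact ENNReal.ofReal_le_ofReal (OrderHomClass.mono Λ fun x => p.truncation_le n (hp x))
  calc ∫⁻ x, ENNReal.ofReal (p.eval x) ∂rieszMeasure Λ
      = ∫⁻ x, liminf (fun n => ENNReal.ofReal (p.truncation n x)) atTop ∂rieszMeasure Λ := by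
        congr with x
        exact ((ENNReal.continuous_ofReal.tendsto _).comp (p.tendsto_truncation x)).liminf_eq.symm
    _ ≤ liminf (fun n => ∫⁻ x, ENNReal.ofReal (p.truncation n x) ∂rieszMeasure Λ) atTop :=
        lintegral_liminf_le fun n => (p.truncation n).continuous.measurable.ennreal_ofReal
    _ ≤ ENNReal.ofReal (Λ (ofPolynomial p)) :=
        liminf_le_of_frequently_le' (.of_forall htrunc)

theorem integrable_eval_of_nonneg : Integrable (fun x => p.eval x) (rieszMeasure Λ) :=
  ⟨p.continuous.aestronglyMeasurable, (hasFiniteIntegral_iff_ofReal (.of_forall hp)).2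
    ((lintegral_ofReal_eval_le hp).trans_lt ENNReal.ofReal_lt_top)⟩

theorem integral_eval_le : ∫ x, p.eval x ∂rieszMeasure Λ ≤ Λ (ofPolynomial p) := by
  rw [integral_eq_lintegral_of_nonneg_ae (.of_forall hp) p.continuous.aestronglyMeasurable]
  exact ENNReal.toReal_le_of_le_ofReal (Λ.map_nonneg fun x => hp x) (lintegral_ofReal_eval_le hp)

theorem le_integral_eval : Λ (ofPolynomial p) ≤ ∫ x, p.eval x ∂rieszMeasure Λ := by
  set c := Λ (ofPolynomial (p * X ^ 2))
  have hbound (n : ℕ) :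
      Λ (ofPolynomial p) ≤ ∫ x, p.eval x ∂rieszMeasure Λ + (1 / ((n : ℝ) + 1)) ^ 2 * c :=
    calc Λ (ofPolynomial p)
        ≤ Λ (ofCompactlySupported (p.truncation n) +
            (1 / ((n : ℝ) + 1)) ^ 2 • ofPolynomial (p * X ^ 2)) :=
          OrderHomClass.mono Λ fun x => by
            have := p.eval_sub_truncation_le n (hp x)
            simp only [Submodule.coe_add, Submodule.coe_smul, coe_ofCompactlySupported,
              coe_ofPolynomial, Pi.add_apply, Pi.smul_apply, smul_eq_mul]
            linarith
      _ = ∫ x, p.truncation n x ∂rieszMeasure Λ + (1 / ((n : ℝ) + 1)) ^ 2 * c := by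
          rw [map_add, map_smul, integral_rieszMeasure, smul_eq_mul]
      _ ≤ ∫ x, p.eval x ∂rieszMeasure Λ + (1 / ((n : ℝ) + 1)) ^ 2 * c :=
          add_le_add_left (integral_mono (p.truncation n).integrable
            (integrable_eval_of_nonneg hp) fun x => p.truncation_le n (hp x)) _
  refine ge_of_tendsto' (x := atTop) ?_ hbound
  simpa using tendsto_const_nhds.add ((tendsto_one_div_add_atTop_nhds_zero_nat.pow 2).mul_const c)

theorem integral_eval_of_nonneg : ∫ x, p.eval x ∂rieszMeasure Λ = Λ (ofPolynomial p) :=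
  (integral_eval_le hp).antisymm (le_integral_eval hp)

end Nonneg

theorem integrable_eval_and_integral_eval (p : ℝ[X]) :
    Integrable (fun x => p.eval x) (rieszMeasure Λ) ∧
      ∫ x, p.eval x ∂rieszMeasure Λ = Λ (ofPolynomial p) := by
  set q := p ^ 2 + 1
  have hq (x : ℝ) : 0 ≤ q.eval x := (abs_nonneg _).trans (p.abs_eval_le_eval_sq_add_one x)
  have hpq (x : ℝ) : 0 ≤ (p + q).eval x := by
    rw [eval_add]
    linarith [neg_abs_le (p.eval x), p.abs_eval_le_eval_sq_add_one x]
  have hsplit : (fun x => p.eval x) = fun x => (p + q).eval x - q.eval x := by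
    ext; simp
  have hpq_int := integrable_eval_of_nonneg (Λ := Λ) hpq
  have hq_int := integrable_eval_of_nonneg (Λ := Λ) hq
  rw [hsplit, integral_sub hpq_int hq_int, integral_eval_of_nonneg hpq,
    integral_eval_of_nonneg hq, ← map_sub, map_add, add_sub_cancel_right]
  exact ⟨hpq_int.sub hq_int, rfl⟩

end polynomialGrowth

open polynomialGrowth in
theorem exists_measure_integral_eval_eq (L : ℝ[X] →ₗ[ℝ] ℝ)
    (hL : ∀ p : ℝ[X], (∀ x, 0 ≤ p.eval x) → 0 ≤ L p) :
    ∃ μ : Measure ℝ, ∀ p : ℝ[X], Integrable (fun x => p.eval x) μ ∧ ∫ x, p.eval x ∂μ = L p := by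
  obtain ⟨Λ, hΛ⟩ := exists_positiveLinearMap_extension L hL
  exact ⟨rieszMeasure Λ, fun p => hΛ p ▸ integrable_eval_and_integral_eval p⟩

theorem diagonal_posPreserver_moment_sequence
    (t : ℕ → ℝ) (T : Polynomial ℝ →ₗ[ℝ] Polynomial ℝ)
    (hdiag : ∀ k : ℕ, T (X ^ k) = t k • X ^ k)
    (hpos : ∀ p : Polynomial ℝ, (∀ x : ℝ, 0 ≤ p.eval x) → ∀ x : ℝ, 0 ≤ (T p).eval x) :
    (∀ p : Polynomial ℝ, (∀ x : ℝ, 0 ≤ p.eval x) → 0 ≤ (T p).eval 1) ∧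
    (∀ k : ℕ, (T (X ^ k)).eval 1 = t k) ∧
    (∃ μ : Measure ℝ, ∀ k : ℕ,
      Integrable (fun x => x ^ k) μ ∧ t k = ∫ x, x ^ k ∂μ) := by
  have hL (p : ℝ[X]) (hp : ∀ x, 0 ≤ p.eval x) : 0 ≤ (T p).eval 1 := hpos p hp 1
  have hmoment (k : ℕ) : (T (X ^ k)).eval 1 = t k := by simp [hdiag]
  obtain ⟨μ, hμ⟩ := exists_measure_integral_eval_eq ((leval 1).comp T) hL
  refine ⟨hL, hmoment, μ, fun k => ?_⟩
  obtain ⟨hint, heq⟩ := hμ (X ^ k)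
  simp only [eval_pow, eval_X, LinearMap.comp_apply, leval_apply, hmoment] at hint heq
  exact ⟨hint, heq.symm⟩
end

section
/- Let ν be a finite Borel measure on ℝ^n all of whose moments s_α = ∫ x^α dν exist. For t ≥ 0 define e^{⊙tν} := Σ_{k∈ℕ₀} (t^k/k!)·ν^{⊙k}, where ν^{⊙0} = δ_𝟙 and ν^{⊙k} is the k-fold multiplicative convolution. Then e^{⊙tν} is a finite Borel measure with moments ∫ x^α d(e^{⊙tν})(x) = e^{t·s_α} for all α ∈ ℕ₀^n. -/
/-!
Monomials `x ↦ x^α` are multiplicative characters of `(ℝ^n, ·)`, so Fubini turns the moments of a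
multiplicative convolution into products of moments: the `α`-th moment of `ν^{⊙k}` is `s_α^k`, and
summing the exponential series termwise gives `e^{t s_α}`. The same computation for `|x^α|`, by
Tonelli, shows that `e^{⊙tν}` has finite absolute moments, which justifies the termwise
integration; `α = 0` gives finiteness of the measure.
-/

open MeasureTheory

/-- `k`-fold multiplicative convolution power, with `ν^{⊙0} = δ_𝟙`. -/
noncomputable def mconvPow {n : ℕ} (ν : Measure (Fin n → ℝ)) : ℕ → Measure (Fin n → ℝ)
  | 0 => Measure.dirac (fun _ => (1 : ℝ))
  | k + 1 => mconv ν (mconvPow ν k)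

/-- The multiplicative exponential `e^{⊙tν} = Σ_k (t^k/k!)·ν^{⊙k}`. -/
noncomputable def mexp {n : ℕ} (t : ℝ) (ν : Measure (Fin n → ℝ)) : Measure (Fin n → ℝ) :=
  Measure.sum (fun k : ℕ => ENNReal.ofReal (t ^ k / (Nat.factorial k)) • mconvPow ν k)

open scoped ENNReal Nat

namespace MeasureTheory.Measure

variable {M : Type*} [Monoid M] [MeasurableSpace M] [MeasurableMul₂ M]
  {𝕜 : Type*} [RCLike 𝕜]

theorem lintegral_enorm_mconv_of_monoidHom {f : M →* 𝕜} (hf : Measurable f)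
    (μ ν : Measure M) [SFinite ν] :
    ∫⁻ x, ‖f x‖ₑ ∂(μ ∗ₘ ν) = (∫⁻ x, ‖f x‖ₑ ∂μ) * ∫⁻ x, ‖f x‖ₑ ∂ν := by
  rw [lintegral_mconv_eq_lintegral_prod hf.enorm]
  simp only [map_mul, enorm_mul]
  exact lintegral_prod_mul hf.enorm.aemeasurable hf.enorm.aemeasurable

theorem integral_mconv_of_monoidHom {f : M →* 𝕜} (hf : Measurable f)
    (μ ν : Measure M) [SFinite μ] [SFinite ν] :
    ∫ x, f x ∂(μ ∗ₘ ν) = (∫ x, f x ∂μ) * ∫ x, f x ∂ν := by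
  rw [mconv, integral_map measurable_mul.aemeasurable hf.aestronglyMeasurable]
  simp only [map_mul]
  exact integral_prod_mul f f

end MeasureTheory.Measure

theorem Real.hasSum_pow_div_factorial (x : ℝ) : HasSum (fun k => x ^ k / k !) (Real.exp x) :=
  Real.exp_eq_exp_ℝ ▸ NormedSpace.expSeries_div_hasSum_exp x

theorem ENNReal.tsum_ofReal_pow_div_factorial {x : ℝ} (hx : 0 ≤ x) :
    ∑' k, ENNReal.ofReal (x ^ k / k !) = ENNReal.ofReal (Real.exp x) := by
  rw [← ENNReal.ofReal_tsum_of_nonneg (fun k => by positivity)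
    (Real.hasSum_pow_div_factorial x).summable, (Real.hasSum_pow_div_factorial x).tsum_eq]

def monomialHom {ι R : Type*} [Fintype ι] [CommMonoid R] (α : ι → ℕ) : (ι → R) →* R where
  toFun x := ∏ i, x i ^ α i
  map_one' := by simp
  map_mul' x y := by simp only [Pi.mul_apply, mul_pow, Finset.prod_mul_distrib]

theorem measurable_monomialHom {ι : Type*} [Fintype ι] (α : ι → ℕ) :
    Measurable (monomialHom α : (ι → ℝ) → ℝ) :=
  Finset.measurable_prod _ fun i _ => (measurable_pi_apply i).pow_const _

section mconvPow

variable {n : ℕ}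

theorem mconv_eq_measure_mconv (μ ν : Measure (Fin n → ℝ)) : mconv μ ν = μ ∗ₘ ν := rfl

instance (ν : Measure (Fin n → ℝ)) [SFinite ν] (k : ℕ) : SFinite (mconvPow ν k) := by
  induction k with
  | zero => rw [mconvPow]; infer_instance
  | succ k ih => rw [mconvPow, mconv_eq_measure_mconv]; infer_instance

variable {f : (Fin n → ℝ) →* ℝ} (ν : Measure (Fin n → ℝ)) [SFinite ν]

theorem lintegral_enorm_mconvPow_of_monoidHom (hf : Measurable f) (k : ℕ) :
    ∫⁻ x, ‖f x‖ₑ ∂(mconvPow ν k) = (∫⁻ x, ‖f x‖ₑ ∂ν) ^ k := by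
  induction k with
  | zero => simp [mconvPow, lintegral_dirac' _ hf.enorm, ← Pi.one_def]
  | succ k ih =>
    rw [mconvPow, mconv_eq_measure_mconv, Measure.lintegral_enorm_mconv_of_monoidHom hf, ih,
      pow_succ']

theorem integral_mconvPow_of_monoidHom (hf : Measurable f) (k : ℕ) :
    ∫ x, f x ∂(mconvPow ν k) = (∫ x, f x ∂ν) ^ k := by
  induction k with
  | zero => simp [mconvPow, ← Pi.one_def]
  | succ k ih =>
    rw [mconvPow, mconv_eq_measure_mconv, Measure.integral_mconv_of_monoidHom hf, ih, pow_succ']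

end mconvPow

section mexp

variable {n : ℕ} {t : ℝ} (ν : Measure (Fin n → ℝ))

theorem lintegral_mexp (g : (Fin n → ℝ) → ℝ≥0∞) :
    ∫⁻ x, g x ∂(mexp t ν) = ∑' k, ENNReal.ofReal (t ^ k / k !) * ∫⁻ x, g x ∂(mconvPow ν k) := by
  simp only [mexp, lintegral_sum_measure, lintegral_smul_measure, smul_eq_mul]

variable [SFinite ν] {f : (Fin n → ℝ) →* ℝ}

theorem lintegral_enorm_mexp_of_monoidHom (hf : Measurable f) (ht : 0 ≤ t)
    (hfin : ∫⁻ x, ‖f x‖ₑ ∂ν ≠ ∞) :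
    ∫⁻ x, ‖f x‖ₑ ∂(mexp t ν) = ENNReal.ofReal (Real.exp (t * (∫⁻ x, ‖f x‖ₑ ∂ν).toReal)) := by
  rw [lintegral_mexp, ← ENNReal.tsum_ofReal_pow_div_factorial (by positivity)]
  simp only [lintegral_enorm_mconvPow_of_monoidHom ν hf]
  generalize ∫⁻ x, ‖f x‖ₑ ∂ν = L at hfin ⊢
  obtain ⟨l, hl, rfl⟩ : ∃ l, 0 ≤ l ∧ ENNReal.ofReal l = L :=
    ⟨L.toReal, ENNReal.toReal_nonneg, ENNReal.ofReal_toReal hfin⟩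
  refine tsum_congr fun k => ?_
  rw [ENNReal.toReal_ofReal hl, ← ENNReal.ofReal_pow hl, ← ENNReal.ofReal_mul (by positivity)]
  congr 1
  ring

theorem integrable_mexp_of_monoidHom (hf : Measurable f) (ht : 0 ≤ t) (hint : Integrable f ν) :
    Integrable f (mexp t ν) :=
  ⟨hf.aestronglyMeasurable, by
    rw [HasFiniteIntegral, lintegral_enorm_mexp_of_monoidHom ν hf ht hint.hasFiniteIntegral.ne]
    exact ENNReal.ofReal_lt_top⟩

theorem integral_mexp_of_monoidHom (hf : Measurable f) (ht : 0 ≤ t) (hint : Integrable f ν) :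
    ∫ x, f x ∂(mexp t ν) = Real.exp (t * ∫ x, f x ∂ν) := by
  have hint' := integrable_mexp_of_monoidHom ν hf ht hint
  rw [mexp] at hint' ⊢
  simp only [integral_sum_measure hint', integral_smul_measure,
    integral_mconvPow_of_monoidHom ν hf, smul_eq_mul]
  generalize ∫ x, f x ∂ν = m
  have hterm (k : ℕ) : (ENNReal.ofReal (t ^ k / k !)).toReal * m ^ k = (t * m) ^ k / k ! := by
    rw [ENNReal.toReal_ofReal (by positivity)]
    ring
  simp only [hterm]
  exact (Real.hasSum_pow_div_factorial (t * m)).tsum_eq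

theorem isFiniteMeasure_mexp [IsFiniteMeasure ν] (ht : 0 ≤ t) : IsFiniteMeasure (mexp t ν) := by
  constructor
  have h := lintegral_enorm_mexp_of_monoidHom ν (f := 1) measurable_const ht (by simp)
  simp only [MonoidHom.one_apply, enorm_one, lintegral_one] at h
  simp [h]

end mexp

theorem mexp_moments {n : ℕ} (ν : Measure (Fin n → ℝ)) [IsFiniteMeasure ν]
    (s : (Fin n → ℕ) → ℝ)
    (hint : ∀ α : Fin n → ℕ, Integrable (fun x => ∏ i, x i ^ α i) ν)
    (hs : ∀ α : Fin n → ℕ, s α = ∫ x, ∏ i, x i ^ α i ∂ν)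
    (t : ℝ) (htpos : 0 ≤ t) :
    IsFiniteMeasure (mexp t ν) ∧
    ∀ α : Fin n → ℕ, ∫ x, ∏ i, x i ^ α i ∂(mexp t ν) = Real.exp (t * s α) := by
  refine ⟨isFiniteMeasure_mexp ν htpos, fun α => ?_⟩
  rw [hs α]
  exact integral_mexp_of_monoidHom ν (measurable_monomialHom α) htpos (hint α)
end
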